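/- arXiv:1710.05185 — 3 statements merged into one kernel-verified Lean document; each statement's English description precedes it below -/
import Mathlib

section
/- Let T be an orthogonal trajectory with n edges and fix a side length s > 0. Then max( sup_{j ∈ {0,…,n}, x ∈ ℝ} w_T(x, (p_j).2 − s), sup_{j ∈ {0,…,n}, y ∈ ℝ} w_T((p_j).1 − s, y) ) ≥ h(T)/2; that is, among the squares whose upper side has the y-coordinate of a vertex of T or whose right side has the x-coordinate of a vertex of T, the supremum of the weights is at least half the weight of a hotspot. -/
open MeasureTheory Set
open scoped ENNReal

/-- `Square s x y` is the axis-parallel square `[x, x+s] × [y, y+s]`. -/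
def Square (s x y : ℝ) : Set (ℝ × ℝ) := Icc x (x + s) ×ˢ Icc y (y + s)

/-- The weight of `Square s x y` with respect to a trajectory `T` on `[t0, tn]`:
the Lebesgue measure of `{t ∈ [t0, tn] : T t ∈ Square s x y}`. -/
noncomputable def wgt (s t0 tn : ℝ) (T : ℝ → ℝ × ℝ) (x y : ℝ) : ℝ≥0∞ :=
  volume {τ ∈ Icc t0 tn | T τ ∈ Square s x y}

/-!
Every time of the trajectory (apart from the final instant) lies on an edge, and by
orthogonality the point `T τ` then shares its height with a vertex or its abscissa with a
vertex. Inside a square `[x, x + s] × [y, y + s]`, the points of the first kind have heights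
among the vertex heights in `[y, y + s]`; if `c` is the largest of these, the square
`[x, x + s] × [c - s, c]` still contains all of them. Symmetrically for abscissas, so the weight
of any square is at most the sum of two tracked weights.
-/

open Fin.NatCast in
theorem exists_mem_Ico_castSucc_succ {α : Type*} [LinearOrder α] {n : ℕ} (t : Fin (n + 1) → α)
    {τ : α} (hτ : τ ∈ Ico (t 0) (t (Fin.last n))) :
    ∃ i : Fin n, τ ∈ Ico (t i.castSucc) (t i.succ) := by
  have hcover := Ico_subset_biUnion_Ico n (fun k : ℕ => t (k : Fin (n + 1)))
  simp only [Nat.cast_zero, Fin.natCast_eq_last] at hcover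
  obtain ⟨i, hi, hτi⟩ := mem_iUnion₂.mp (hcover hτ)
  rw [Finset.mem_range] at hi
  refine ⟨⟨i, hi⟩, ?_⟩
  have hcast : ((i : ℕ) : Fin (n + 1)) = (⟨i, hi⟩ : Fin n).castSucc :=
    Fin.ext (Fin.val_cast_of_lt (by omega))
  have hsucc : ((i + 1 : ℕ) : Fin (n + 1)) = (⟨i, hi⟩ : Fin n).succ :=
    Fin.ext (Fin.val_cast_of_lt (by omega))
  rwa [← hcast, ← hsucc]

theorem mem_square_swap_iff {s x y : ℝ} {q : ℝ × ℝ} :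
    q.swap ∈ Square s y x ↔ q ∈ Square s x y :=
  and_comm

theorem wgt_comp_swap (s t0 tn : ℝ) (T : ℝ → ℝ × ℝ) (x y : ℝ) :
    wgt s t0 tn (Prod.swap ∘ T) y x = wgt s t0 tn T x y := by
  simp only [wgt, Function.comp_apply, mem_square_swap_iff]

theorem volume_square_snd_eq_vertex_le {ι : Type*} [Fintype ι] (s t0 tn : ℝ)
    (T : ℝ → ℝ × ℝ) (p : ι → ℝ × ℝ) (x y : ℝ) :
    volume {τ ∈ Icc t0 tn | T τ ∈ Square s x y ∧ ∃ j, (T τ).2 = (p j).2} ≤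
      ⨆ j, ⨆ x', wgt s t0 tn T x' ((p j).2 - s) := by
  classical
  set J := Finset.univ.filter fun j => (p j).2 ∈ Icc y (y + s)
  rcases J.eq_empty_or_nonempty with hJ | hJ
  · refine (measure_eq_zero_iff_ae_notMem.mpr (ae_of_all _ ?_)).trans_le zero_le
    rintro τ ⟨-, ⟨-, hy⟩, j, hj⟩
    exact Finset.eq_empty_iff_forall_notMem.mp hJ j (by simpa [J, ← hj] using hy)
  obtain ⟨j₀, hj₀, hmax⟩ := J.exists_max_image (fun j => (p j).2) hJ
  refine le_iSup₂_of_le j₀ x (measure_mono ?_)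
  rintro τ ⟨hτ, ⟨hx, hy⟩, j, hj⟩
  have hj₀y : (p j₀).2 ≤ y + s := (Finset.mem_filter.mp hj₀).2.2
  have hjJ : j ∈ J := by simpa [J, ← hj] using hy
  refine ⟨hτ, hx, ?_, ?_⟩ <;> [linarith [hy.1]; linarith [hmax j hjJ]]

theorem volume_square_fst_eq_vertex_le {ι : Type*} [Fintype ι] (s t0 tn : ℝ)
    (T : ℝ → ℝ × ℝ) (p : ι → ℝ × ℝ) (x y : ℝ) :
    volume {τ ∈ Icc t0 tn | T τ ∈ Square s x y ∧ ∃ j, (T τ).1 = (p j).1} ≤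
      ⨆ j, ⨆ y', wgt s t0 tn T ((p j).1 - s) y' := by
  simpa only [Function.comp_apply, Prod.snd_swap, mem_square_swap_iff, wgt_comp_swap] using
    volume_square_snd_eq_vertex_le s t0 tn (Prod.swap ∘ T) (Prod.swap ∘ p) y x

theorem exists_vertex_coord_eq_of_orthogonal {n : ℕ} {t : Fin (n + 1) → ℝ}
    {p : Fin (n + 1) → ℝ × ℝ} {T : ℝ → ℝ × ℝ}
    (hT : ∀ i : Fin n, ∀ τ ∈ Icc (t i.castSucc) (t i.succ),
      T τ = p i.castSucc +
        ((τ - t i.castSucc) / (t i.succ - t i.castSucc)) • (p i.succ - p i.castSucc))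
    (horth : ∀ i : Fin n,
      (p i.castSucc).1 = (p i.succ).1 ∨ (p i.castSucc).2 = (p i.succ).2)
    {τ : ℝ} (hτ : τ ∈ Ico (t 0) (t (Fin.last n))) :
    (∃ j, (T τ).2 = (p j).2) ∨ ∃ j, (T τ).1 = (p j).1 := by
  obtain ⟨i, hi⟩ := exists_mem_Ico_castSucc_succ t hτ
  rw [hT i τ (Ico_subset_Icc_self hi)]
  rcases horth i with h | h
  · exact .inr ⟨i.castSucc, by simp [h]⟩
  · exact .inl ⟨i.castSucc, by simp [h]⟩

theorem tracked_squares_half_hotspot_general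
    (n : ℕ) (s : ℝ)
    (t : Fin (n + 1) → ℝ)
    (p : Fin (n + 1) → ℝ × ℝ)
    (T : ℝ → ℝ × ℝ)
    (hT : ∀ i : Fin n, ∀ τ ∈ Icc (t i.castSucc) (t i.succ),
      T τ = p i.castSucc +
        ((τ - t i.castSucc) / (t i.succ - t i.castSucc)) • (p i.succ - p i.castSucc))
    (horth : ∀ i : Fin n,
      (p i.castSucc).1 = (p i.succ).1 ∨ (p i.castSucc).2 = (p i.succ).2) :
    max
      (⨆ j : Fin (n + 1), ⨆ x : ℝ,
        wgt s (t 0) (t (Fin.last n)) T x ((p j).2 - s))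
      (⨆ j : Fin (n + 1), ⨆ y : ℝ,
        wgt s (t 0) (t (Fin.last n)) T ((p j).1 - s) y) ≥
      (⨆ q : ℝ × ℝ, wgt s (t 0) (t (Fin.last n)) T q.1 q.2) / 2 := by
  rw [ge_iff_le, ENNReal.iSup_div]
  refine iSup_le fun ⟨x, y⟩ => ENNReal.div_le_of_le_mul ?_
  set I := Icc (t 0) (t (Fin.last n))
  set H := {τ ∈ I | T τ ∈ Square s x y ∧ ∃ j, (T τ).2 = (p j).2}
  set V := {τ ∈ I | T τ ∈ Square s x y ∧ ∃ j, (T τ).1 = (p j).1}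
  have hcover : {τ ∈ I | T τ ∈ Square s x y} ⊆ insert (t (Fin.last n)) (H ∪ V) := by
    rintro τ ⟨hτ, hsq⟩
    rcases eq_or_lt_of_le hτ.2 with hlast | hlt
    · exact .inl hlast
    · exact .inr ((exists_vertex_coord_eq_of_orthogonal hT horth ⟨hτ.1, hlt⟩).imp
        (fun h => ⟨hτ, hsq, h⟩) (fun h => ⟨hτ, hsq, h⟩))
  calc wgt s (t 0) (t (Fin.last n)) T x y
      ≤ volume (insert (t (Fin.last n)) (H ∪ V)) := measure_mono hcover
    _ = volume (H ∪ V) := measure_congr (insert_ae_eq_self _ _)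
    _ ≤ volume H + volume V := measure_union_le _ _
    _ ≤ _ + _ := add_le_add (volume_square_snd_eq_vertex_le s _ _ T p x y)
        (volume_square_fst_eq_vertex_le s _ _ T p x y)
    _ ≤ _ := by rw [mul_two]; exact add_le_add (le_max_left _ _) (le_max_right _ _)

theorem tracked_squares_half_hotspot
    (n : ℕ) (s : ℝ) (hs : 0 < s)
    (t : Fin (n + 1) → ℝ) (ht : StrictMono t)
    (p : Fin (n + 1) → ℝ × ℝ)
    (T : ℝ → ℝ × ℝ)
    (hT : ∀ i : Fin n, ∀ τ ∈ Icc (t i.castSucc) (t i.succ),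
      T τ = p i.castSucc +
        ((τ - t i.castSucc) / (t i.succ - t i.castSucc)) • (p i.succ - p i.castSucc))
    (horth : ∀ i : Fin n,
      (p i.castSucc).1 = (p i.succ).1 ∨ (p i.castSucc).2 = (p i.succ).2) :
    max
      (⨆ j : Fin (n + 1), ⨆ x : ℝ,
        wgt s (t 0) (t (Fin.last n)) T x ((p j).2 - s))
      (⨆ j : Fin (n + 1), ⨆ y : ℝ,
        wgt s (t 0) (t (Fin.last n)) T ((p j).1 - s) y) ≥
      (⨆ q : ℝ × ℝ, wgt s (t 0) (t (Fin.last n)) T q.1 q.2) / 2 :=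
  tracked_squares_half_hotspot_general n s t p T hT horth
end

section
/- Let T be a trajectory in ℝ³ with n ≥ 1 edges, each edge axis-parallel (for each 1 ≤ i ≤ n, the points p_{i−1} and p_i differ in at most one coordinate), and such that every edge parallel to the z-axis has positive length. Fix a side length s > 0. Then for every (x, y, z) ∈ ℝ³ there exist (x', y', z') ∈ ℝ³ and an index j ∈ {0, …, n} such that w_T(x', y', z') ≥ w_T(x, y, z) and the z-coordinate (p_j).3 of the vertex p_j equals z' or z' + s; that is, for any axis-parallel cube there is a cube of at least the same weight one of whose two xy-parallel face planes passes through a vertex of T. -/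
open MeasureTheory Set
open scoped ENNReal

/-- `Cube s x y z` is the axis-parallel cube `[x, x+s] × [y, y+s] × [z, z+s]` in `ℝ³`. -/
def Cube (s x y z : ℝ) : Set (ℝ × ℝ × ℝ) :=
  Icc x (x + s) ×ˢ Icc y (y + s) ×ˢ Icc z (z + s)

/-- The weight of `Cube s x y z` with respect to a trajectory `T` on `[t0, tn]`:
the Lebesgue measure of `{t ∈ [t0, tn] : T t ∈ Cube s x y z}`. -/
noncomputable def wgt3 (s t0 tn : ℝ) (T : ℝ → ℝ × ℝ × ℝ) (x y z : ℝ) : ℝ≥0∞ :=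
  volume {τ ∈ Icc t0 tn | T τ ∈ Cube s x y z}

/-!
Fix `x` and `y` and regard the weight as a function of the height `z` of the cube: a sum of
contributions of the edges. Call the heights `(p j).3` and `(p j).3 - s` breakpoints. On an open
interval between consecutive breakpoints, an edge at constant height contributes a constant
amount, attained or exceeded at both ends of the interval. A vertical edge from height `u` to
height `v`, traversed in time `Δt`, contributes `Δt / |v - u|` times the positive part of
`min (z + s) (max u v) - max z (min u v)`, and this difference is affine in `z` on the interval.
The positive part being convex, the weight lies below its chord there, so it is dominated by its
value at one of the two breakpoints. Below or above all breakpoints the cube misses the trajectory.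
-/

open Function

lemma exists_mem_Ioc_castSucc_succ {α : Type*} [LinearOrder α] :
    ∀ {n : ℕ} (t : Fin (n + 1) → α) {τ : α}, τ ∈ Ioc (t 0) (t (Fin.last n)) →
      ∃ i : Fin n, τ ∈ Ioc (t i.castSucc) (t i.succ)
  | 0, _, _, hτ => absurd (hτ.1.trans_le hτ.2) (lt_irrefl _)
  | n + 1, t, τ, hτ => by
    by_cases hτn : τ ≤ t (Fin.last n).castSucc
    · obtain ⟨i, hi⟩ := exists_mem_Ioc_castSucc_succ (t ∘ Fin.castSucc) ⟨hτ.1, hτn⟩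
      exact ⟨i.castSucc, hi⟩
    · exact ⟨Fin.last n, lt_of_not_ge hτn, hτ.2⟩

namespace Monotone

variable {α : Type*} {n : ℕ} {t : Fin (n + 1) → α}

lemma iUnion_Ioc_castSucc_succ [LinearOrder α] (ht : Monotone t) :
    ⋃ i : Fin n, Ioc (t i.castSucc) (t i.succ) = Ioc (t 0) (t (Fin.last n)) :=
  (iUnion_subset fun _ => Ioc_subset_Ioc (ht (Fin.zero_le _)) (ht (Fin.le_last _))).antisymm
    fun _ hτ => mem_iUnion.2 (exists_mem_Ioc_castSucc_succ t hτ)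

lemma pairwise_disjoint_on_Ioc_castSucc_succ [Preorder α] (ht : Monotone t) :
    Pairwise (Disjoint on fun i : Fin n => Ioc (t i.castSucc) (t i.succ)) :=
  (pairwise_disjoint_on _).2 fun _ _ hij => disjoint_iff_inf_le.mpr fun _ ⟨⟨_, h₁⟩, ⟨h₂, _⟩⟩ =>
    h₂.not_ge (h₁.trans (ht (Fin.succ_le_castSucc_iff.2 hij)))

end Monotone

lemma measure_Icc_inter_eq_sum {μ : Measure ℝ} [NullSingletonClass μ] {n : ℕ}
    {t : Fin (n + 1) → ℝ} (ht : Monotone t) (A : Set ℝ) :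
    μ (Icc (t 0) (t (Fin.last n)) ∩ A) = ∑ i : Fin n, μ (Icc (t i.castSucc) (t i.succ) ∩ A) := by
  have hIoc : ∀ a b : ℝ, μ (Icc a b ∩ A) = μ.restrict (Ioc a b) A := fun a b => by
    rw [Measure.restrict_congr_set Ioc_ae_eq_Icc, Measure.restrict_apply' measurableSet_Icc,
      inter_comm]
  rw [hIoc, ← ht.iUnion_Ioc_castSucc_succ,
    Measure.restrict_iUnion ht.pairwise_disjoint_on_Ioc_castSucc_succ fun _ => measurableSet_Ioc,
    Measure.sum_apply_of_countable, tsum_fintype]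
  simp only [hIoc]

lemma Finset.exists_gap_around {α : Type*} [LinearOrder α] (B : Finset α) {z : α} (hz : z ∉ B) :
    (∀ b ∈ B, z < b) ∨ (∀ b ∈ B, b < z) ∨
      ∃ c₁ ∈ B, ∃ c₂ ∈ B, c₁ < z ∧ z < c₂ ∧ ∀ b ∈ B, b ∉ Set.Ioo c₁ c₂ := by
  classical
  have hne : ∀ b ∈ B, b < z ∨ z < b := fun b hb => lt_or_gt_of_ne fun h => hz (h ▸ hb)
  by_cases hlo : (B.filter (· < z)).Nonempty
  swap
  · simp only [Finset.not_nonempty_iff_eq_empty, Finset.filter_eq_empty_iff] at hlo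
    exact Or.inl fun b hb => (hne b hb).resolve_left (hlo hb)
  by_cases hhi : (B.filter (z < ·)).Nonempty
  swap
  · simp only [Finset.not_nonempty_iff_eq_empty, Finset.filter_eq_empty_iff] at hhi
    exact Or.inr (Or.inl fun b hb => (hne b hb).resolve_right (hhi hb))
  obtain ⟨c₁, hc₁, hmax⟩ := (B.filter (· < z)).exists_max_image id hlo
  obtain ⟨c₂, hc₂, hmin⟩ := (B.filter (z < ·)).exists_min_image id hhi
  rw [Finset.mem_filter] at hc₁ hc₂
  refine Or.inr (Or.inr ⟨c₁, hc₁.1, c₂, hc₂.1, hc₁.2, hc₂.2, fun b hb hbc => ?_⟩)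
  rcases hne b hb with h | h
  · exact (hmax b (Finset.mem_filter.2 ⟨hb, h⟩)).not_gt hbc.1
  · exact (hmin b (Finset.mem_filter.2 ⟨hb, h⟩)).not_gt hbc.2

noncomputable def segmentPath {E : Type*} [AddCommGroup E] [Module ℝ E] (a b : ℝ) (P Q : E)
    (τ : ℝ) : E :=
  P + ((τ - a) / (b - a)) • (Q - P)

section SegmentPath

variable {E F : Type*} [AddCommGroup E] [Module ℝ E] [AddCommGroup F] [Module ℝ F] {a b τ : ℝ}

@[simp]
lemma segmentPath_fst (P Q : E × F) : (segmentPath a b P Q τ).1 = segmentPath a b P.1 Q.1 τ :=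
  rfl

@[simp]
lemma segmentPath_snd (P Q : E × F) : (segmentPath a b P Q τ).2 = segmentPath a b P.2 Q.2 τ :=
  rfl

@[simp]
lemma segmentPath_self (P : E) : segmentPath a b P P τ = P := by
  simp [segmentPath]

lemma segmentPath_mem_uIcc {u v : ℝ} (hτ : τ ∈ Icc a b) : segmentPath a b u v τ ∈ uIcc u v := by
  have hτa : 0 ≤ τ - a := sub_nonneg.2 hτ.1
  have hτb : τ - a ≤ b - a := by linarith [hτ.2]
  have h₀ : 0 ≤ (τ - a) / (b - a) := div_nonneg hτa (hτa.trans hτb)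
  have h₁ : (τ - a) / (b - a) ≤ 1 := div_le_one_of_le₀ hτb (hτa.trans hτb)
  rw [segmentPath, smul_eq_mul]
  rcases le_total u v with h | h
  · rw [uIcc_of_le h]; constructor <;> nlinarith
  · rw [uIcc_of_ge h]; constructor <;> nlinarith

lemma volume_Icc_inter_segmentPath_preimage {u v : ℝ} (hab : a < b) (huv : u ≠ v) (X : Set ℝ) :
    volume (Icc a b ∩ segmentPath a b u v ⁻¹' X) =
      ENNReal.ofReal ((b - a) / |v - u|) * volume (uIcc u v ∩ X) := by
  set c := (v - u) / (b - a)
  have hc : c ≠ 0 := div_ne_zero (sub_ne_zero.2 huv.symm) (sub_pos.2 hab).ne'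
  have hpath : segmentPath a b u v = (· + (u - c * a)) ∘ (c * ·) := by
    funext τ
    simp only [segmentPath, comp_apply, smul_eq_mul, c]
    ring
  have hinj : Injective (segmentPath a b u v) :=
    hpath ▸ (add_left_injective _).comp (mul_right_injective₀ hc)
  have himage : segmentPath a b u v '' Icc a b = uIcc u v := by
    rw [← uIcc_of_le hab.le, hpath, image_comp, image_const_mul_uIcc, image_add_const_uIcc]
    congr 1
    · ring
    · simp only [c]
      field_simp [(sub_pos.2 hab).ne']
      ring
  calc volume (Icc a b ∩ segmentPath a b u v ⁻¹' X)
      = volume (segmentPath a b u v ⁻¹' (uIcc u v ∩ X)) := by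
        rw [preimage_inter, ← himage, preimage_image_eq _ hinj]
    _ = ENNReal.ofReal |c⁻¹| * volume (uIcc u v ∩ X) := by
        rw [hpath, preimage_comp, Real.volume_preimage_mul_left hc, measure_preimage_add_right]
    _ = _ := by
        rw [abs_inv, abs_div, abs_of_pos (sub_pos.2 hab), inv_div]

end SegmentPath

lemma volume_uIcc_inter_Icc (u v l r : ℝ) :
    volume (uIcc u v ∩ Icc l r) = ENNReal.ofReal (min (max u v) r - max (min u v) l) := by
  rw [uIcc, Icc_inter_Icc, Real.volume_Icc]

section ConvexCombination

variable {c₁ c₂ r : ℝ}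

lemma min_convexComb_of_notMem_Ioo (hc : c₁ ≤ c₂) (hr : r ∈ Icc 0 1) {k : ℝ}
    (hk : k ∉ Ioo c₁ c₂) :
    min k ((1 - r) * c₁ + r * c₂) = (1 - r) * min k c₁ + r * min k c₂ := by
  have h₁ : c₁ ≤ (1 - r) * c₁ + r * c₂ := by nlinarith [hr.1]
  have h₂ : (1 - r) * c₁ + r * c₂ ≤ c₂ := by nlinarith [hr.2]
  rcases le_or_gt k c₁ with hk₁ | hk₁
  · rw [min_eq_left hk₁, min_eq_left (hk₁.trans hc), min_eq_left (hk₁.trans h₁)]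
    ring
  · have hk₂ : c₂ ≤ k := not_lt.1 fun h => hk ⟨hk₁, h⟩
    rw [min_eq_right hk₁.le, min_eq_right hk₂, min_eq_right (h₂.trans hk₂)]

lemma max_convexComb_of_notMem_Ioo (hc : c₁ ≤ c₂) (hr : r ∈ Icc 0 1) {k : ℝ}
    (hk : k ∉ Ioo c₁ c₂) :
    max k ((1 - r) * c₁ + r * c₂) = (1 - r) * max k c₁ + r * max k c₂ := by
  have h₁ : c₁ ≤ (1 - r) * c₁ + r * c₂ := by nlinarith [hr.1]
  have h₂ : (1 - r) * c₁ + r * c₂ ≤ c₂ := by nlinarith [hr.2]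
  rcases le_or_gt k c₁ with hk₁ | hk₁
  · rw [max_eq_right hk₁, max_eq_right (hk₁.trans hc), max_eq_right (hk₁.trans h₁)]
  · have hk₂ : c₂ ≤ k := not_lt.1 fun h => hk ⟨hk₁, h⟩
    rw [max_eq_left hk₁.le, max_eq_left hk₂, max_eq_left (h₂.trans hk₂)]
    ring

lemma min_add_sub_max_convexComb (hc : c₁ ≤ c₂) (hr : r ∈ Icc 0 1) {m M s : ℝ}
    (hm : m ∉ Ioo c₁ c₂) (hM : M - s ∉ Ioo c₁ c₂) :
    min M ((1 - r) * c₁ + r * c₂ + s) - max m ((1 - r) * c₁ + r * c₂) =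
      (1 - r) * (min M (c₁ + s) - max m c₁) + r * (min M (c₂ + s) - max m c₂) := by
  have hshift : ∀ w, min M (w + s) = min (M - s) w + s := fun w => by
    rw [← min_add_add_right, sub_add_cancel]
  rw [hshift, hshift, hshift, min_convexComb_of_notMem_Ioo hc hr hM,
    max_convexComb_of_notMem_Ioo hc hr hm]
  ring

lemma ENNReal.ofReal_one_sub_add_ofReal (hr : r ∈ Icc 0 1) :
    ENNReal.ofReal (1 - r) + ENNReal.ofReal r = 1 := by
  rw [← ENNReal.ofReal_add (sub_nonneg.2 hr.2) hr.1, sub_add_cancel, ENNReal.ofReal_one]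

lemma ENNReal.ofReal_convexComb_le (hr : r ∈ Icc 0 1) (u v : ℝ) :
    ENNReal.ofReal ((1 - r) * u + r * v) ≤
      ENNReal.ofReal (1 - r) * ENNReal.ofReal u + ENNReal.ofReal r * ENNReal.ofReal v := by
  rw [← ENNReal.ofReal_mul (sub_nonneg.2 hr.2), ← ENNReal.ofReal_mul hr.1]
  exact ENNReal.ofReal_add_le

lemma ENNReal.le_or_le_of_le_convexComb {A B C : ℝ≥0∞} (hr : r ∈ Icc 0 1)
    (h : A ≤ ENNReal.ofReal (1 - r) * B + ENNReal.ofReal r * C) : A ≤ B ∨ A ≤ C := by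
  have hmax : A ≤ max B C := by
    calc A ≤ ENNReal.ofReal (1 - r) * max B C + ENNReal.ofReal r * max B C :=
          h.trans (add_le_add (mul_le_mul_right (le_max_left B C) _)
            (mul_le_mul_right (le_max_right B C) _))
      _ = max B C := by rw [← add_mul, ENNReal.ofReal_one_sub_add_ofReal hr, one_mul]
  rcases max_choice B C with h | h <;> rw [h] at hmax
  exacts [Or.inl hmax, Or.inr hmax]

end ConvexCombination

noncomputable def segmentWeight (s x y a b : ℝ) (P Q : ℝ × ℝ × ℝ) (w : ℝ) : ℝ≥0∞ :=
  volume (Icc a b ∩ segmentPath a b P Q ⁻¹' Cube s x y w)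

section SegmentWeight

variable {s x y a b c₁ c₂ r : ℝ} {P Q : ℝ × ℝ × ℝ}

lemma segmentWeight_eq_zero {w : ℝ}
    (h : ∀ τ ∈ Icc a b, (segmentPath a b P Q τ).2.2 ∉ Icc w (w + s)) :
    segmentWeight s x y a b P Q w = 0 := by
  have hempty : Icc a b ∩ segmentPath a b P Q ⁻¹' Cube s x y w = ∅ :=
    eq_empty_iff_forall_notMem.2 fun τ ⟨hτ, hC⟩ => h τ hτ hC.2.2
  rw [segmentWeight, hempty, measure_empty]

lemma segmentWeight_eq_zero_of_lt {w : ℝ}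
    (h : (w + s < P.2.2 ∧ w + s < Q.2.2) ∨ (P.2.2 < w ∧ Q.2.2 < w)) :
    segmentWeight s x y a b P Q w = 0 := by
  refine segmentWeight_eq_zero fun τ hτ hw => ?_
  have hz := segmentPath_mem_uIcc (u := P.2.2) (v := Q.2.2) hτ
  simp only [segmentPath_snd] at hw
  rcases h with ⟨h₁, h₂⟩ | ⟨h₁, h₂⟩ <;> rcases mem_uIcc.1 hz with ⟨h₃, h₄⟩ | ⟨h₃, h₄⟩ <;>
    linarith [hw.1, hw.2]

lemma segmentWeight_of_parallel_z (hx : P.1 = Q.1) (hy : P.2.1 = Q.2.1) (w : ℝ) :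
    segmentWeight s x y a b P Q w =
      if P.1 ∈ Icc x (x + s) ∧ P.2.1 ∈ Icc y (y + s) then
        volume (Icc a b ∩ segmentPath a b P.2.2 Q.2.2 ⁻¹' Icc w (w + s)) else 0 := by
  split_ifs with hxy
  · rw [segmentWeight]
    congr 1
    ext τ
    simp only [mem_inter_iff, mem_preimage, Cube, mem_prod, segmentPath_fst, segmentPath_snd,
      ← hx, ← hy, segmentPath_self, hxy, true_and]
  · have hempty : Icc a b ∩ segmentPath a b P Q ⁻¹' Cube s x y w = ∅ :=
      eq_empty_iff_forall_notMem.2 fun τ hτ => hxy <| by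
        simp only [mem_inter_iff, mem_preimage, Cube, mem_prod, segmentPath_fst, segmentPath_snd,
          ← hx, ← hy, segmentPath_self] at hτ
        exact ⟨hτ.2.1, hτ.2.2.1⟩
    rw [segmentWeight, hempty, measure_empty]

lemma segmentWeight_convexComb_le_of_parallel_z (hab : a < b) (hx : P.1 = Q.1)
    (hy : P.2.1 = Q.2.1) (hz : P.2.2 ≠ Q.2.2) (hc : c₁ ≤ c₂) (hr : r ∈ Icc 0 1)
    (hP : P.2.2 ∉ Ioo c₁ c₂ ∧ P.2.2 - s ∉ Ioo c₁ c₂)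
    (hQ : Q.2.2 ∉ Ioo c₁ c₂ ∧ Q.2.2 - s ∉ Ioo c₁ c₂) :
    segmentWeight s x y a b P Q ((1 - r) * c₁ + r * c₂) ≤
      ENNReal.ofReal (1 - r) * segmentWeight s x y a b P Q c₁ +
        ENNReal.ofReal r * segmentWeight s x y a b P Q c₂ := by
  simp only [segmentWeight_of_parallel_z hx hy]
  split_ifs
  swap
  · simp
  simp only [volume_Icc_inter_segmentPath_preimage hab hz, volume_uIcc_inter_Icc]
  have hm : min P.2.2 Q.2.2 ∉ Ioo c₁ c₂ := by
    rcases min_choice P.2.2 Q.2.2 with h | h <;> rw [h]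
    exacts [hP.1, hQ.1]
  have hM : max P.2.2 Q.2.2 - s ∉ Ioo c₁ c₂ := by
    rcases max_choice P.2.2 Q.2.2 with h | h <;> rw [h]
    exacts [hP.2, hQ.2]
  rw [min_add_sub_max_convexComb hc hr hm hM]
  set K := ENNReal.ofReal ((b - a) / |Q.2.2 - P.2.2|)
  calc _ ≤ K * (ENNReal.ofReal (1 - r) * ENNReal.ofReal _ + ENNReal.ofReal r * ENNReal.ofReal _) :=
        mul_le_mul_right (ENNReal.ofReal_convexComb_le hr _ _) K
    _ = _ := by ring

lemma segmentWeight_convexComb_le_of_snd_snd_eq (hz : P.2.2 = Q.2.2) (hc : c₁ < c₂)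
    (hr : r ∈ Ioo 0 1) (hP : P.2.2 ∉ Ioo c₁ c₂ ∧ P.2.2 - s ∉ Ioo c₁ c₂) :
    segmentWeight s x y a b P Q ((1 - r) * c₁ + r * c₂) ≤
      ENNReal.ofReal (1 - r) * segmentWeight s x y a b P Q c₁ +
        ENNReal.ofReal r * segmentWeight s x y a b P Q c₂ := by
  set z := (1 - r) * c₁ + r * c₂
  have hz₁ : c₁ < z := by nlinarith [hr.1]
  have hz₂ : z < c₂ := by nlinarith [hr.2]
  have hheight : ∀ τ, (segmentPath a b P Q τ).2.2 = P.2.2 := fun τ => by simp [hz]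
  by_cases hin : P.2.2 ∈ Icc z (z + s)
  · have hc₂ : c₂ ≤ P.2.2 := not_lt.1 fun h => hP.1 ⟨hz₁.trans_le hin.1, h⟩
    have hc₁ : P.2.2 - s ≤ c₁ := not_lt.1 fun h => hP.2 ⟨h, by linarith [hin.2]⟩
    have hsame : ∀ w, P.2.2 ∈ Icc w (w + s) →
        segmentWeight s x y a b P Q w = segmentWeight s x y a b P Q z := fun w hw => by
      simp only [segmentWeight]
      congr 2
      ext τ
      simp only [mem_preimage, Cube, mem_prod, hheight, hw, hin]
    rw [hsame c₁ ⟨by linarith, by linarith⟩, hsame c₂ ⟨hc₂, by linarith⟩, ← add_mul,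
      ENNReal.ofReal_one_sub_add_ofReal (Ioo_subset_Icc_self hr), one_mul]
  · rw [segmentWeight_eq_zero fun τ _ hτ => hin (hheight τ ▸ hτ)]
    exact zero_le

lemma segmentWeight_convexComb_le (hab : a < b)
    (haxis : P.2.2 = Q.2.2 ∨ (P.1 = Q.1 ∧ P.2.1 = Q.2.1)) (hc : c₁ < c₂) (hr : r ∈ Ioo 0 1)
    (hP : P.2.2 ∉ Ioo c₁ c₂ ∧ P.2.2 - s ∉ Ioo c₁ c₂)
    (hQ : Q.2.2 ∉ Ioo c₁ c₂ ∧ Q.2.2 - s ∉ Ioo c₁ c₂) :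
    segmentWeight s x y a b P Q ((1 - r) * c₁ + r * c₂) ≤
      ENNReal.ofReal (1 - r) * segmentWeight s x y a b P Q c₁ +
        ENNReal.ofReal r * segmentWeight s x y a b P Q c₂ := by
  by_cases hz : P.2.2 = Q.2.2
  · exact segmentWeight_convexComb_le_of_snd_snd_eq hz hc hr hP
  · obtain ⟨hx, hy⟩ := haxis.resolve_left hz
    exact segmentWeight_convexComb_le_of_parallel_z hab hx hy hz hc.le (Ioo_subset_Icc_self hr)
      hP hQ

end SegmentWeight

section Trajectory

variable {n : ℕ} {s x y : ℝ} {t : Fin (n + 1) → ℝ} {p : Fin (n + 1) → ℝ × ℝ × ℝ}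
  {T : ℝ → ℝ × ℝ × ℝ}

lemma wgt3_eq_sum_segmentWeight (ht : Monotone t)
    (hT : ∀ i : Fin n, ∀ τ ∈ Icc (t i.castSucc) (t i.succ),
      T τ = segmentPath (t i.castSucc) (t i.succ) (p i.castSucc) (p i.succ) τ) (w : ℝ) :
    wgt3 s (t 0) (t (Fin.last n)) T x y w =
      ∑ i : Fin n, segmentWeight s x y (t i.castSucc) (t i.succ) (p i.castSucc) (p i.succ) w :=
  (measure_Icc_inter_eq_sum ht _).trans
    (Finset.sum_congr rfl fun i _ => congrArg volume (EqOn.inter_preimage_eq (hT i) _))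

lemma wgt3_eq_zero (ht : Monotone t)
    (hT : ∀ i : Fin n, ∀ τ ∈ Icc (t i.castSucc) (t i.succ),
      T τ = segmentPath (t i.castSucc) (t i.succ) (p i.castSucc) (p i.succ) τ) {w : ℝ}
    (h : (∀ j, w + s < (p j).2.2) ∨ ∀ j, (p j).2.2 < w) :
    wgt3 s (t 0) (t (Fin.last n)) T x y w = 0 := by
  rw [wgt3_eq_sum_segmentWeight ht hT]
  refine Finset.sum_eq_zero fun i _ => segmentWeight_eq_zero_of_lt ?_
  exact h.imp (fun h => ⟨h _, h _⟩) fun h => ⟨h _, h _⟩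

lemma wgt3_convexComb_le {c₁ c₂ r : ℝ} (ht : StrictMono t)
    (hT : ∀ i : Fin n, ∀ τ ∈ Icc (t i.castSucc) (t i.succ),
      T τ = segmentPath (t i.castSucc) (t i.succ) (p i.castSucc) (p i.succ) τ)
    (haxis : ∀ i : Fin n, (p i.castSucc).2.2 = (p i.succ).2.2 ∨
      ((p i.castSucc).1 = (p i.succ).1 ∧ (p i.castSucc).2.1 = (p i.succ).2.1))
    (hc : c₁ < c₂) (hr : r ∈ Ioo 0 1)
    (hgap : ∀ j, (p j).2.2 ∉ Ioo c₁ c₂ ∧ (p j).2.2 - s ∉ Ioo c₁ c₂) :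
    wgt3 s (t 0) (t (Fin.last n)) T x y ((1 - r) * c₁ + r * c₂) ≤
      ENNReal.ofReal (1 - r) * wgt3 s (t 0) (t (Fin.last n)) T x y c₁ +
        ENNReal.ofReal r * wgt3 s (t 0) (t (Fin.last n)) T x y c₂ := by
  simp only [wgt3_eq_sum_segmentWeight ht.monotone hT, Finset.mul_sum, ← Finset.sum_add_distrib]
  exact Finset.sum_le_sum fun i _ => segmentWeight_convexComb_le (ht Fin.castSucc_lt_succ)
    (haxis i) hc hr (hgap _) (hgap _)

end Trajectory

theorem cube_on_xy_face_through_vertex_general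
    (n : ℕ) (s : ℝ)
    (t : Fin (n + 1) → ℝ) (ht : StrictMono t)
    (p : Fin (n + 1) → ℝ × ℝ × ℝ)
    (T : ℝ → ℝ × ℝ × ℝ)
    (hT : ∀ i : Fin n, ∀ τ ∈ Icc (t i.castSucc) (t i.succ),
      T τ = p i.castSucc +
        ((τ - t i.castSucc) / (t i.succ - t i.castSucc)) • (p i.succ - p i.castSucc))
    (haxis : ∀ i : Fin n,
      ((p i.castSucc).1 = (p i.succ).1 ∧ (p i.castSucc).2.1 = (p i.succ).2.1) ∨
      ((p i.castSucc).1 = (p i.succ).1 ∧ (p i.castSucc).2.2 = (p i.succ).2.2) ∨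
      ((p i.castSucc).2.1 = (p i.succ).2.1 ∧ (p i.castSucc).2.2 = (p i.succ).2.2)) :
    ∀ x y z : ℝ, ∃ x' y' z' : ℝ, ∃ j : Fin (n + 1),
      wgt3 s (t 0) (t (Fin.last n)) T x' y' z' ≥
        wgt3 s (t 0) (t (Fin.last n)) T x y z ∧
      ((p j).2.2 = z' ∨ (p j).2.2 = z' + s) := by
  intro x y z
  set W := wgt3 s (t 0) (t (Fin.last n)) T x y
  set B := Finset.univ.image (fun j => (p j).2.2) ∪ Finset.univ.image (fun j => (p j).2.2 - s)
  have hB : ∀ b, b ∈ B ↔ ∃ j, (p j).2.2 = b ∨ (p j).2.2 = b + s := by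
    simp [B, sub_eq_iff_eq_add, exists_or]
  have hvertex : ∀ j, (p j).2.2 ∈ B ∧ (p j).2.2 - s ∈ B := fun j =>
    ⟨(hB _).2 ⟨j, Or.inl rfl⟩, (hB _).2 ⟨j, Or.inr (sub_add_cancel _ _).symm⟩⟩
  suffices ∃ c ∈ B, W z ≤ W c by
    obtain ⟨c, hcB, hc⟩ := this
    obtain ⟨j, hj⟩ := (hB c).1 hcB
    exact ⟨x, y, c, j, hc, hj⟩
  by_cases hzB : z ∈ B
  · exact ⟨z, hzB, le_rfl⟩
  rcases B.exists_gap_around hzB with hup | hdown | ⟨c₁, hc₁, c₂, hc₂, hz₁, hz₂, hgap⟩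
  · refine ⟨_, (hvertex 0).1, (wgt3_eq_zero ht.monotone hT (Or.inl fun j => ?_)).trans_le zero_le⟩
    linarith [hup _ (hvertex j).2]
  · exact ⟨_, (hvertex 0).1, (wgt3_eq_zero ht.monotone hT (Or.inr fun j =>
      hdown _ (hvertex j).1)).trans_le zero_le⟩
  have hc : 0 < c₂ - c₁ := by linarith
  obtain ⟨r, hr, rfl⟩ : ∃ r ∈ Ioo (0 : ℝ) 1, (1 - r) * c₁ + r * c₂ = z :=
    ⟨(z - c₁) / (c₂ - c₁), ⟨div_pos (by linarith) hc, (div_lt_one hc).2 (by linarith)⟩, by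
      field_simp [hc.ne']
      ring⟩
  have hchord := wgt3_convexComb_le (x := x) (y := y) ht hT
    (fun i => (haxis i).elim Or.inr fun h => Or.inl (h.elim And.right And.right))
    (sub_pos.1 hc) hr fun j => ⟨hgap _ (hvertex j).1, hgap _ (hvertex j).2⟩
  rcases ENNReal.le_or_le_of_le_convexComb (Ioo_subset_Icc_self hr) hchord with h | h
  exacts [⟨c₁, hc₁, h⟩, ⟨c₂, hc₂, h⟩]

theorem cube_on_xy_face_through_vertex
    (n : ℕ) (hn : 1 ≤ n) (s : ℝ) (hs : 0 < s)
    (t : Fin (n + 1) → ℝ) (ht : StrictMono t)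
    (p : Fin (n + 1) → ℝ × ℝ × ℝ)
    (T : ℝ → ℝ × ℝ × ℝ)
    (hT : ∀ i : Fin n, ∀ τ ∈ Icc (t i.castSucc) (t i.succ),
      T τ = p i.castSucc +
        ((τ - t i.castSucc) / (t i.succ - t i.castSucc)) • (p i.succ - p i.castSucc))
    (haxis : ∀ i : Fin n,
      ((p i.castSucc).1 = (p i.succ).1 ∧ (p i.castSucc).2.1 = (p i.succ).2.1) ∨
      ((p i.castSucc).1 = (p i.succ).1 ∧ (p i.castSucc).2.2 = (p i.succ).2.2) ∨
      ((p i.castSucc).2.1 = (p i.succ).2.1 ∧ (p i.castSucc).2.2 = (p i.succ).2.2))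
    (hzpos : ∀ i : Fin n,
      (p i.castSucc).1 = (p i.succ).1 → (p i.castSucc).2.1 = (p i.succ).2.1 →
        (p i.castSucc).2.2 ≠ (p i.succ).2.2) :
    ∀ x y z : ℝ, ∃ x' y' z' : ℝ, ∃ j : Fin (n + 1),
      wgt3 s (t 0) (t (Fin.last n)) T x' y' z' ≥
        wgt3 s (t 0) (t (Fin.last n)) T x y z ∧
      ((p j).2.2 = z' ∨ (p j).2.2 = z' + s) :=
  cube_on_xy_face_through_vertex_general n s t ht p T hT haxis
end

section
/- Let H be a horizontal trajectory with n edges, each of positive length (i.e., (p_{i−1}).1 ≠ (p_i).1 for all 1 ≤ i ≤ n), fix a side length s > 0 and y ∈ ℝ. Let (a, b) be an open interval such that for every x ∈ (a, b) and every j ∈ {0, …, n}, (p_j).1 ≠ x and (p_j).1 ≠ x + s. Then the function x ↦ w_H(x, y) is affine on (a, b); that is, there exist constants α, β ∈ ℝ with w_H(x, y) = α·x + β for all x ∈ (a, b). -/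
open MeasureTheory Set
open scoped ENNReal

/-! On each edge the trajectory runs at constant nonzero speed along a horizontal segment, so the
time it spends in `Square s x y` is either zero (the segment's height misses `[y, y + s]`) or a
fixed multiple of the length of `[[u, v]] ∩ [x, x + s]`, where `u`, `v` are the abscissae of the
edge's endpoints. That length is `max 0 (min (max u v) (x + s) - max (min u v) x)`, which can only
bend where `x` or `x + s` meets `u` or `v`; between such events it is affine in `x`, and so is the
sum over the edges. -/

def IsAffineOn (s : Set ℝ) (f : ℝ → ℝ) : Prop := ∃ α β : ℝ, ∀ x ∈ s, f x = α * x + β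

theorem IsPreconnected.forall_lt_or_forall_gt_of_ne {s : Set ℝ} (hs : IsPreconnected s)
    {f g : ℝ → ℝ} (hf : ContinuousOn f s) (hg : ContinuousOn g s)
    (hne : ∀ x ∈ s, f x ≠ g x) : (∀ x ∈ s, f x < g x) ∨ (∀ x ∈ s, g x < f x) := by
  by_contra! ⟨⟨a, ha, hga⟩, ⟨b, hb, hfb⟩⟩
  obtain ⟨x, hx, hfgx⟩ := hs.intermediate_value₂ ha hb hg hf hga hfb
  exact hne x hx hfgx.symm

namespace IsAffineOn

variable {s : Set ℝ} {f g : ℝ → ℝ}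

theorem const (c : ℝ) : IsAffineOn s fun _ => c := ⟨0, c, by simp⟩

theorem id : IsAffineOn s fun x => x := ⟨1, 0, by simp⟩

theorem congr (hf : IsAffineOn s f) (h : EqOn g f s) : IsAffineOn s g := by
  obtain ⟨α, β, hf⟩ := hf
  exact ⟨α, β, fun x hx => (h hx).trans (hf x hx)⟩

theorem add (hf : IsAffineOn s f) (hg : IsAffineOn s g) : IsAffineOn s fun x => f x + g x := by
  obtain ⟨α, β, hf⟩ := hf
  obtain ⟨γ, δ, hg⟩ := hg
  exact ⟨α + γ, β + δ, fun x hx => by simp only [hf x hx, hg x hx]; ring⟩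

theorem sub (hf : IsAffineOn s f) (hg : IsAffineOn s g) : IsAffineOn s fun x => f x - g x := by
  obtain ⟨α, β, hf⟩ := hf
  obtain ⟨γ, δ, hg⟩ := hg
  exact ⟨α - γ, β - δ, fun x hx => by simp only [hf x hx, hg x hx]; ring⟩

theorem const_mul (hf : IsAffineOn s f) (c : ℝ) : IsAffineOn s fun x => c * f x := by
  obtain ⟨α, β, hf⟩ := hf
  exact ⟨c * α, c * β, fun x hx => by simp only [hf x hx]; ring⟩

theorem sum {ι : Type*} (I : Finset ι) {F : ι → ℝ → ℝ} (hF : ∀ i ∈ I, IsAffineOn s (F i)) :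
    IsAffineOn s fun x => ∑ i ∈ I, F i x := by
  classical
  induction I using Finset.induction_on with
  | empty => simpa using const 0
  | insert i I hi ih =>
    simp only [Finset.sum_insert hi]
    exact (hF i (Finset.mem_insert_self i I)).add
      (ih fun j hj => hF j (Finset.mem_insert_of_mem hj))

theorem continuousOn (hf : IsAffineOn s f) : ContinuousOn f s := by
  obtain ⟨α, β, hf⟩ := hf
  exact (continuousOn_congr hf).mpr (by fun_prop)

theorem max (hs : IsPreconnected s) (hf : IsAffineOn s f) (hg : IsAffineOn s g)
    (hne : ∀ x ∈ s, f x ≠ g x) : IsAffineOn s fun x => max (f x) (g x) := by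
  rcases hs.forall_lt_or_forall_gt_of_ne hf.continuousOn hg.continuousOn hne with h | h
  · exact hg.congr fun x hx => max_eq_right (h x hx).le
  · exact hf.congr fun x hx => max_eq_left (h x hx).le

theorem min (hs : IsPreconnected s) (hf : IsAffineOn s f) (hg : IsAffineOn s g)
    (hne : ∀ x ∈ s, f x ≠ g x) : IsAffineOn s fun x => min (f x) (g x) := by
  rcases hs.forall_lt_or_forall_gt_of_ne hf.continuousOn hg.continuousOn hne with h | h
  · exact hf.congr fun x hx => min_eq_left (h x hx).le
  · exact hg.congr fun x hx => min_eq_right (h x hx).le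

end IsAffineOn

theorem isAffineOn_volume_Icc_inter_Icc {lo hi w a b : ℝ} (hlohi : lo < hi) (hw : 0 < w)
    (hlo : ∀ x ∈ Ioo a b, lo ≠ x ∧ lo ≠ x + w) (hhi : ∀ x ∈ Ioo a b, hi ≠ x ∧ hi ≠ x + w) :
    IsAffineOn (Ioo a b) fun x => (volume (Icc lo hi ∩ Icc x (x + w))).toReal := by
  have hab : IsPreconnected (Ioo a b) := isPreconnected_Ioo
  have hleft : IsAffineOn (Ioo a b) fun x => max lo x :=
    (IsAffineOn.const lo).max hab IsAffineOn.id fun x hx => (hlo x hx).1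
  have hright : IsAffineOn (Ioo a b) fun x => min hi (x + w) :=
    (IsAffineOn.const hi).min hab (IsAffineOn.id.add (IsAffineOn.const w))
      fun x hx => (hhi x hx).2
  have hlen := (hright.sub hleft).max hab (IsAffineOn.const 0) fun x hx => by
    obtain ⟨hlo₁, hlo₂⟩ := hlo x hx
    obtain ⟨hhi₁, -⟩ := hhi x hx
    rcases min_choice hi (x + w) with h₁ | h₁ <;> rcases max_choice lo x with h₂ | h₂ <;>
      rw [h₁, h₂, sub_ne_zero] <;> grind
  refine hlen.congr fun x _ => ?_
  simp only [Icc_inter_Icc, Real.volume_Icc, ENNReal.toReal_ofReal']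

theorem isAffineOn_volume_uIcc_inter_Icc {u v w a b : ℝ} (huv : u ≠ v) (hw : 0 < w)
    (hu : ∀ x ∈ Ioo a b, u ≠ x ∧ u ≠ x + w) (hv : ∀ x ∈ Ioo a b, v ≠ x ∧ v ≠ x + w) :
    IsAffineOn (Ioo a b) fun x => (volume (uIcc u v ∩ Icc x (x + w))).toReal := by
  rcases huv.lt_or_gt with h | h
  · simpa only [uIcc_of_le h.le] using isAffineOn_volume_Icc_inter_Icc h hw hu hv
  · simpa only [uIcc_of_ge h.le] using isAffineOn_volume_Icc_inter_Icc h hw hv hu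

theorem volume_preimage_affine {u c k : ℝ} (hk : k ≠ 0) (E : Set ℝ) :
    volume ((fun τ => u + (τ - c) * k) ⁻¹' E) = ENNReal.ofReal |k⁻¹| * volume E := by
  change volume ((fun τ => τ - c) ⁻¹' ((fun z => z * k) ⁻¹' ((fun z => u + z) ⁻¹' E))) = _
  simp only [sub_eq_add_neg, measure_preimage_add_right, Real.volume_preimage_mul_right hk,
    measure_preimage_add]

theorem preimage_affine_uIcc {u v α β : ℝ} (huv : u ≠ v) (hαβ : α ≠ β) :
    (fun τ => u + (τ - α) * ((v - u) / (β - α))) ⁻¹' uIcc u v = uIcc α β := by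
  have hβα : β - α ≠ 0 := sub_ne_zero.2 hαβ.symm
  have hvu : v - u ≠ 0 := sub_ne_zero.2 huv.symm
  change (fun τ => τ - α) ⁻¹' ((fun z => z * _) ⁻¹' ((fun z => u + z) ⁻¹' uIcc u v)) = _
  rw [preimage_const_add_uIcc, preimage_mul_const_uIcc (div_ne_zero hvu hβα),
    preimage_sub_const_uIcc]
  congr 1 <;> field_simp <;> ring

section HorizontalEdge

variable {α β : ℝ} {p q : ℝ × ℝ} {T : ℝ → ℝ × ℝ}

theorem Icc_inter_preimage_square_of_horizontal
    (hT : ∀ τ ∈ Icc α β, T τ = p + ((τ - α) / (β - α)) • (q - p)) (hpq : p.2 = q.2)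
    (s x y : ℝ) :
    Icc α β ∩ T ⁻¹' Square s x y =
      Icc α β ∩ (fun τ => p.1 + (τ - α) * ((q.1 - p.1) / (β - α))) ⁻¹' Icc x (x + s) ∩
        {_τ | p.2 ∈ Icc y (y + s)} := by
  ext τ
  by_cases hτ : τ ∈ Icc α β
  · simp only [mem_inter_iff, mem_preimage, mem_ofPred_eq, hτ, hT τ hτ, Square, mem_prod,
      Prod.fst_add, Prod.snd_add, Prod.smul_fst, Prod.smul_snd, Prod.fst_sub, Prod.snd_sub,
      smul_eq_mul, ← hpq, sub_self, mul_zero, add_zero, mul_comm_div, true_and]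
  · simp [hτ]

theorem measurableSet_Icc_inter_preimage_square_of_horizontal
    (hT : ∀ τ ∈ Icc α β, T τ = p + ((τ - α) / (β - α)) • (q - p)) (hpq : p.2 = q.2)
    (s x y : ℝ) : MeasurableSet (Icc α β ∩ T ⁻¹' Square s x y) := by
  rw [Icc_inter_preimage_square_of_horizontal hT hpq]
  exact (measurableSet_Icc.inter (measurableSet_preimage (by fun_prop) measurableSet_Icc)).inter
    (MeasurableSet.const _)

theorem volume_Icc_inter_preimage_square_of_horizontal (hαβ : α < β)
    (hT : ∀ τ ∈ Icc α β, T τ = p + ((τ - α) / (β - α)) • (q - p)) (hpq : p.2 = q.2)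
    (hne : p.1 ≠ q.1) (s x y : ℝ) :
    volume (Icc α β ∩ T ⁻¹' Square s x y) =
      (if p.2 ∈ Icc y (y + s) then ENNReal.ofReal |(β - α) / (q.1 - p.1)| else 0) *
        volume (uIcc p.1 q.1 ∩ Icc x (x + s)) := by
  rw [Icc_inter_preimage_square_of_horizontal hT hpq]
  split_ifs with hy
  · have hk : (q.1 - p.1) / (β - α) ≠ 0 := div_ne_zero (sub_ne_zero.2 hne.symm) (by linarith)
    rw [show {_τ : ℝ | p.2 ∈ Icc y (y + s)} = univ from eq_univ_of_forall fun _ => hy,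
      inter_univ, ← uIcc_of_le hαβ.le, ← preimage_affine_uIcc hne hαβ.ne,
      ← preimage_inter, volume_preimage_affine hk, inv_div]
  · simp [hy]

end HorizontalEdge

theorem volume_Icc_inter_eq_sum {n : ℕ} {t : Fin (n + 1) → ℝ} (ht : Monotone t) {E : Set ℝ}
    (hE : ∀ i : Fin n, MeasurableSet (Icc (t i.castSucc) (t i.succ) ∩ E)) :
    volume (Icc (t 0) (t (Fin.last n)) ∩ E) =
      ∑ i : Fin n, volume (Icc (t i.castSucc) (t i.succ) ∩ E) := by
  induction n with
  | zero => simpa using measure_mono_null inter_subset_left (measure_singleton (t 0))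
  | succ n ih =>
    rw [← Fin.succ_last]
    have hsplit : t 0 ≤ t (Fin.last n).castSucc ∧ t (Fin.last n).castSucc ≤ t (Fin.last n).succ :=
      ⟨ht (Fin.zero_le _), ht (Fin.le_last _)⟩
    have hnull : AEDisjoint volume (Icc (t 0) (t (Fin.last n).castSucc) ∩ E)
        (Icc (t (Fin.last n).castSucc) (t (Fin.last n).succ) ∩ E) := by
      refine measure_mono_null (fun τ hτ => ?_) (measure_singleton (t (Fin.last n).castSucc))
      rw [← Icc_inter_Icc_eq_singleton hsplit.1 hsplit.2]
      exact ⟨hτ.1.1, hτ.2.1⟩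
    rw [← Icc_union_Icc_eq_Icc hsplit.1 hsplit.2, union_inter_distrib_right,
      measure_union₀ (hE (Fin.last n)).nullMeasurableSet hnull, Fin.sum_univ_castSucc]
    have hinit := ih (t := t ∘ Fin.castSucc) (ht.comp Fin.strictMono_castSucc.monotone) fun i => by
      simpa [← Fin.succ_castSucc] using hE i.castSucc
    simp only [Function.comp_apply, Fin.castSucc_zero, ← Fin.succ_castSucc] at hinit
    rw [hinit]

theorem weight_affine_between_events
    (n : ℕ) (s : ℝ) (hs : 0 < s)
    (t : Fin (n + 1) → ℝ) (ht : StrictMono t)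
    (p : Fin (n + 1) → ℝ × ℝ)
    (T : ℝ → ℝ × ℝ)
    (hT : ∀ i : Fin n, ∀ τ ∈ Icc (t i.castSucc) (t i.succ),
      T τ = p i.castSucc +
        ((τ - t i.castSucc) / (t i.succ - t i.castSucc)) • (p i.succ - p i.castSucc))
    (hhoriz : ∀ i : Fin n, (p i.castSucc).2 = (p i.succ).2)
    (hpos : ∀ i : Fin n, (p i.castSucc).1 ≠ (p i.succ).1)
    (y a b : ℝ)
    (hfree : ∀ x ∈ Ioo a b, ∀ j : Fin (n + 1), (p j).1 ≠ x ∧ (p j).1 ≠ x + s) :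
    ∃ α β : ℝ, ∀ x ∈ Ioo a b,
      (wgt s (t 0) (t (Fin.last n)) T x y).toReal = α * x + β := by
  have hwgt (x : ℝ) : (wgt s (t 0) (t (Fin.last n)) T x y).toReal =
      ∑ i : Fin n, (volume (Icc (t i.castSucc) (t i.succ) ∩ T ⁻¹' Square s x y)).toReal := by
    rw [← ENNReal.toReal_sum fun i _ =>
      ((measure_mono inter_subset_left).trans_lt measure_Icc_lt_top).ne]
    exact congrArg ENNReal.toReal <| volume_Icc_inter_eq_sum ht.monotone fun i =>
      measurableSet_Icc_inter_preimage_square_of_horizontal (hT i) (hhoriz i) s x y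
  have hedge (i : Fin n) :
      IsAffineOn (Ioo a b) fun x =>
        (volume (Icc (t i.castSucc) (t i.succ) ∩ T ⁻¹' Square s x y)).toReal := by
    simp only [volume_Icc_inter_preimage_square_of_horizontal (ht (Fin.castSucc_lt_succ (i := i)))
      (hT i) (hhoriz i) (hpos i), ENNReal.toReal_mul]
    exact (isAffineOn_volume_uIcc_inter_Icc (hpos i) hs (fun x hx => hfree x hx _)
      (fun x hx => hfree x hx _)).const_mul _
  exact (IsAffineOn.sum Finset.univ fun i _ => hedge i).congr fun x _ => hwgt x
end
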